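/- Let W be a basis of F_{q^n} over F_q with dual basis B, let S_{W,j} = { y ∈ F_{q^n}^* : Tr(β_j y) ≠ 0, Tr(β_i y) = 0 for i > j }, and let T_{W,i} be the projective polynomials defined from the cofactors of the Moore matrix of W, with Z_{W,j} = { x ∈ μ_{(q^n-1)/(q-1)} : T_{W,j}(x) ≠ 0, T_{W,i}(x) = 0 for i > j }. Then Z_{W,j} = { y^{q-1} : y ∈ S_{W,j} } for each 0 ≤ j ≤ n-1, and μ_{(q^n-1)/(q-1)} is the disjoint union of Z_{W,0}, …, Z_{W,n-1}. -/

import Mathlib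

/-- The Moore matrix of `s`, with `(i,j)` entry `s i ^ q ^ j`, `q = |K|`. -/
def mooreMatrix (K : Type*) [Field K] [Fintype K] {L : Type*} [Field L] {m : ℕ}
    (s : Fin m → L) : Matrix (Fin m) (Fin m) L :=
  Matrix.of fun i j => s i ^ Fintype.card K ^ (j : ℕ)

/-- The `(i,0)`-cofactor of the Moore matrix of `s`. -/
def mooreCof (K : Type*) [Field K] [Fintype K] {L : Type*} [Field L] {n : ℕ}
    (s : Fin (n + 1) → L) (i : Fin (n + 1)) : L :=
  (-1 : L) ^ (i : ℕ) *
    ((mooreMatrix K s).submatrix i.succAbove (Fin.succAbove 0)).det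

/-- The projective polynomial `T_{W,i}(x) = ∑ₖ (-1)^{k(n-1)} cᵢ^{qᵏ} x^{(qᵏ-1)/(q-1)}`,
where here the basis has `n + 1` elements (so the paper's `n - 1` is `n`). -/
def Tproj (K : Type*) [Field K] [Fintype K] {L : Type*} [Field L] {n : ℕ}
    (s : Fin (n + 1) → L) (i : Fin (n + 1)) (x : L) : L :=
  ∑ k : Fin (n + 1), (-1 : L) ^ ((k : ℕ) * n) * mooreCof K s i ^ Fintype.card K ^ (k : ℕ) *
    x ^ ((Fintype.card K ^ (k : ℕ) - 1) / (Fintype.card K - 1))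

/-- `S_{W,j} = { y ∈ L* : Tr(βⱼ y) ≠ 0 and Tr(βᵢ y) = 0 for all i > j }`. -/
def traceFlagPiece (K : Type*) [Field K] {L : Type*} [Field L] [Algebra K L] {n : ℕ}
    (β : Fin n → L) (j : Fin n) : Set L :=
  {y | y ≠ 0 ∧ Algebra.trace K L (β j * y) ≠ 0 ∧
    ∀ i : Fin n, j < i → Algebra.trace K L (β i * y) = 0}

/-- `Z_{W,j} = { x ∈ μ : T_{W,j}(x) ≠ 0 and T_{W,i}(x) = 0 for all i > j }`. -/
def muFlagPiece (K : Type*) [Field K] [Fintype K] {L : Type*} [Field L] {n : ℕ}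
    (ω : Fin (n + 1) → L) (j : Fin (n + 1)) : Set L :=
  {x | (x ≠ 0 ∧ x ^ ((Fintype.card K ^ (n + 1) - 1) / (Fintype.card K - 1)) = 1) ∧
    Tproj K ω j x ≠ 0 ∧ ∀ i : Fin (n + 1), j < i → Tproj K ω i x = 0}

/-!
Let `M` be the Moore matrix of the basis `ω` and `y ≠ 0`. Replace row `i` of `M` by
`(y ^ q ^ k)ₖ`. Expanding along that row gives `T_{W,i}(y ^ (q - 1)) * y`: Frobenius permutes the
columns of `M` cyclically, so the `(i, k)` minor is `±` the `q ^ k`-th power of the `(i, 0)` minor.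
On the other hand `y ↦ y ^ q ^ k` is `F_q`-linear and `y = ∑ᵢ Tr(βᵢ y) ωᵢ`, so the same
determinant is `Tr(βᵢ y) * det M`, and `det M ≠ 0` by Dedekind's independence of the powers of
Frobenius. Hence `T_{W,i}(y ^ (q - 1)) = 0 ↔ Tr(βᵢ y) = 0`. Since `y ↦ y ^ (q - 1)` maps `L*`
onto `μ_ℓ`, the pieces `Z_{W,j}` are the images of the `S_{W,j}`, and the latter partition `L*`
according to the last nonzero coordinate of `y` in the basis `ω`.
-/

open Matrix FiniteField

theorem IsCyclic.exists_pow_eq_of_pow_eq_one {G : Type*} [CommGroup G] [IsCyclic G] [Finite G]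
    {d e : ℕ} (hG : Nat.card G = d * e) {x : G} (hx : x ^ e = 1) : ∃ y, y ^ d = x := by
  have hd : 0 < d := Nat.pos_of_mul_pos_right (hG ▸ Nat.card_pos)
  have hle : (powMonoidHom d : G →* G).range ≤ (powMonoidHom e).ker := by
    rintro _ ⟨y, rfl⟩
    rw [MonoidHom.mem_ker, powMonoidHom_apply, powMonoidHom_apply, ← pow_mul, ← hG,
      pow_card_eq_one']
  have hge : Nat.card (powMonoidHom e : G →* G).ker ≤
      Nat.card (powMonoidHom d : G →* G).range := by
    rw [IsCyclic.card_powMonoidHom_ker, IsCyclic.card_powMonoidHom_range, hG,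
      Nat.gcd_eq_right (dvd_mul_left e d), Nat.gcd_eq_right (dvd_mul_right d e),
      Nat.mul_div_cancel_left _ hd]
  obtain ⟨y, hy⟩ : x ∈ (powMonoidHom d : G →* G).range := by
    rw [Subgroup.eq_of_le_of_card_ge hle hge]
    exact hx
  exact ⟨y, hy⟩

theorem FiniteField.image_pow_setOf_ne_zero {L : Type*} [Field L] [Fintype L] {d e : ℕ}
    (hL : Fintype.card L - 1 = d * e) :
    (fun y : L => y ^ d) '' {y | y ≠ 0} = {x | x ≠ 0 ∧ x ^ e = 1} := by
  ext x
  constructor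
  · rintro ⟨y, hy, rfl⟩
    exact ⟨pow_ne_zero d hy, by rw [← pow_mul, ← hL, pow_card_sub_one_eq_one y hy]⟩
  · rintro ⟨hx0, hx⟩
    obtain ⟨y, hy⟩ := IsCyclic.exists_pow_eq_of_pow_eq_one (G := Lˣ)
      (by rw [Nat.card_units, Nat.card_eq_fintype_card, hL]) (x := Units.mk0 x hx0)
      (Units.ext (by simpa using hx))
    exact ⟨y, y.ne_zero, by simpa using congrArg Units.val hy⟩

theorem pow_sub_one_pow_div_mul_self {M : Type*} [Monoid M] {q : ℕ} (hq : 1 ≤ q) (k : ℕ)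
    (y : M) : (y ^ (q - 1)) ^ ((q ^ k - 1) / (q - 1)) * y = y ^ q ^ k := by
  rw [← pow_mul, Nat.mul_div_cancel' (Nat.sub_one_dvd_pow_sub_one q k), ← pow_succ,
    Nat.sub_add_cancel (Nat.one_le_pow _ _ hq)]

theorem finRotate_succAbove_castSucc {n : ℕ} (j c : Fin n) :
    finRotate (n + 1) (j.castSucc.succAbove c) = j.succ.succAbove (finRotate n c) := by
  obtain _ | n := n
  · exact c.elim0
  apply Fin.ext
  simp only [Fin.succAbove, Fin.lt_def, coe_finRotate, Fin.ext_iff, Fin.val_castSucc,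
    Fin.val_succ, Fin.val_last, apply_ite Fin.val]
  split_ifs <;> omega

section Trace

variable {K L : Type*} [Field K] [Field L] [Algebra K L]

theorem trace_mul_eq_repr {ι : Type*} [Fintype ι] [DecidableEq ι] (b : Module.Basis ι K L)
    (β : ι → L) (hdual : ∀ i j, Algebra.trace K L (β i * b j) = if i = j then 1 else 0)
    (i : ι) (y : L) : Algebra.trace K L (β i * y) = b.repr y i := by
  have h : (Algebra.trace K L).comp (LinearMap.mulLeft K (β i)) = b.coord i :=
    b.ext fun j => by simp [hdual, Finsupp.single_apply, eq_comm]
  exact LinearMap.congr_fun h y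

theorem iUnion_traceFlagPiece {n : ℕ} (b : Module.Basis (Fin n) K L) {β : Fin n → L}
    (hdual : ∀ i j, Algebra.trace K L (β i * b j) = if i = j then 1 else 0) :
    ⋃ j, traceFlagPiece K β j = {y | y ≠ 0} := by
  classical
  ext y
  simp only [Set.mem_iUnion, Set.mem_ofPred_eq]
  refine ⟨fun ⟨_, hy, _⟩ => hy, fun hy => ?_⟩
  let s := Finset.univ.filter fun i => Algebra.trace K L (β i * y) ≠ 0
  have hs : s.Nonempty := by
    by_contra! hs
    refine hy (b.ext_elem fun i => ?_)
    have hi : i ∉ s := by simp [hs]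
    simpa [s, trace_mul_eq_repr b β hdual] using hi
  obtain ⟨j, hj, hmax⟩ := s.exists_max_image id hs
  refine ⟨j, hy, (Finset.mem_filter.1 hj).2, fun i hji => ?_⟩
  by_contra hi
  exact (hmax i (Finset.mem_filter.2 ⟨Finset.mem_univ i, hi⟩)).not_gt hji

end Trace

section Frobenius

variable {K L : Type*} [Field K] [Fintype K] [Field L] [Algebra K L]

theorem frobeniusAlgHom_pow_apply (k : ℕ) (x : L) :
    (frobeniusAlgHom K L ^ k) x = x ^ Fintype.card K ^ k := by
  rw [AlgHom.coe_pow, coe_frobeniusAlgHom, pow_iterate]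

theorem neg_one_pow_pow_card_pow (a k : ℕ) :
    ((-1 : L) ^ a) ^ Fintype.card K ^ k = (-1) ^ a := by
  rw [← frobeniusAlgHom_pow_apply, map_pow, map_neg, map_one]

theorem pow_card_pow_finrank [Fintype L] (x : L) :
    x ^ Fintype.card K ^ Module.finrank K L = x := by
  rw [← Module.card_eq_pow_finrank, FiniteField.pow_card]

theorem Module.Basis.pow_card_pow_eq_sum {ι : Type*} [Fintype ι] (b : Module.Basis ι K L)
    (k : ℕ) (x : L) :
    x ^ Fintype.card K ^ k = ∑ i, b.repr x i • b i ^ Fintype.card K ^ k := by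
  simp_rw [← frobeniusAlgHom_pow_apply]
  conv_lhs => rw [← b.sum_repr x]
  simp only [map_sum, map_smul]

theorem det_mooreMatrix_ne_zero [Finite L] {m : ℕ} (b : Module.Basis (Fin m) K L) :
    (mooreMatrix K ⇑b).det ≠ 0 := by
  intro h
  obtain ⟨v, hv0, hv⟩ := exists_mulVec_eq_zero_iff.2 h
  have hvanish : ∀ x : L, ∑ j, v j * x ^ Fintype.card K ^ (j : ℕ) = 0 := by
    intro x
    simp_rw [b.pow_card_pow_eq_sum _ x, Finset.mul_sum, mul_smul_comm]
    rw [Finset.sum_comm]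
    refine Finset.sum_eq_zero fun i _ => ?_
    rw [← Finset.smul_sum]
    have hi := congrFun hv i
    simp only [mulVec, dotProduct, mooreMatrix, of_apply, Pi.zero_apply] at hi
    simp_rw [mul_comm (v _)]
    rw [hi, smul_zero]
  have hinj : Function.Injective fun j : Fin m =>
      ((frobeniusAlgHom K L ^ (j : ℕ) : L →ₐ[K] L) : L →* L) := by
    intro i j hij
    have hm : m = orderOf (frobeniusAlgHom K L) := by
      rw [orderOf_frobeniusAlgHom, Module.finrank_eq_card_basis b, Fintype.card_fin]
    refine Fin.ext (pow_injOn_Iio_orderOf (by rw [Set.mem_Iio, ← hm]; exact i.isLt)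
      (by rw [Set.mem_Iio, ← hm]; exact j.isLt) ?_)
    exact AlgHom.ext (DFunLike.congr_fun hij :)
  have hv0' := Fintype.linearIndependent_iff.1 ((linearIndependent_monoidHom L L).comp _ hinj) v
    (funext fun x => by
      simpa only [Function.comp_apply, Finset.sum_apply, Pi.smul_apply, MonoidHom.coe_coe,
        frobeniusAlgHom_pow_apply, smul_eq_mul, Pi.zero_apply] using hvanish x)
  exact hv0 (funext hv0')

theorem det_updateRow_mooreMatrix_basis {m : ℕ} (b : Module.Basis (Fin m) K L) (i : Fin m)
    (y : L) :
    ((mooreMatrix K ⇑b).updateRow i fun c => y ^ Fintype.card K ^ (c : ℕ)).det =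
      algebraMap K L (b.repr y i) * (mooreMatrix K ⇑b).det := by
  have hrow : (fun c : Fin m => y ^ Fintype.card K ^ (c : ℕ)) =
      ∑ k, algebraMap K L (b.repr y k) • mooreMatrix K ⇑b k := by
    ext c
    simp [b.pow_card_pow_eq_sum _ y, mooreMatrix, Algebra.smul_def]
  rw [hrow, det_updateRow_sum, smul_eq_mul]

end Frobenius

section MooreMinor

variable {K L : Type*} [Field K] [Fintype K] [Field L] [Fintype L] [Algebra K L] {n : ℕ}

def mooreMinor (K : Type*) [Field K] [Fintype K] {L : Type*} [Field L] {n : ℕ}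
    (s : Fin (n + 1) → L) (i j : Fin (n + 1)) : L :=
  ((mooreMatrix K s).submatrix i.succAbove j.succAbove).det

theorem mooreMatrix_map_frobeniusAlgHom (hL : Module.finrank K L = n + 1)
    (s : Fin (n + 1) → L) :
    (mooreMatrix K s).map (frobeniusAlgHom K L) =
      (mooreMatrix K s).submatrix id (finRotate (n + 1)) := by
  ext a c
  simp only [map_apply, submatrix_apply, id_eq, mooreMatrix, of_apply, frobeniusAlgHom_apply,
    ← pow_mul, ← pow_succ]
  by_cases hc : c = Fin.last n
  · subst hc
    rw [finRotate_last, Fin.val_last, Fin.val_zero, pow_zero, pow_one, ← hL, pow_card_pow_finrank]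
  · rw [coe_finRotate_of_ne_last hc]

theorem frobeniusAlgHom_mooreMinor (hL : Module.finrank K L = n + 1) (s : Fin (n + 1) → L)
    (i : Fin (n + 1)) (j : Fin n) :
    frobeniusAlgHom K L (mooreMinor K s i j.castSucc) =
      (-1) ^ (n + 1) * mooreMinor K s i j.succ := by
  have hsign : ((Equiv.Perm.sign (finRotate n) : ℤ) : L) = (-1) ^ (n + 1) := by
    obtain _ | n := n
    · exact j.elim0
    simp [sign_finRotate, pow_succ]
  rw [mooreMinor, ← AlgHom.coe_toRingHom, RingHom.map_det, RingHom.mapMatrix_apply,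
    AlgHom.coe_toRingHom, ← submatrix_map, mooreMatrix_map_frobeniusAlgHom hL, submatrix_submatrix]
  simp only [Function.comp_def, id_eq, finRotate_succAbove_castSucc]
  rw [← hsign]
  exact det_permute' (finRotate n) ((mooreMatrix K s).submatrix i.succAbove j.succ.succAbove)

theorem mooreMinor_eq_neg_one_pow_mul_pow (hL : Module.finrank K L = n + 1)
    (s : Fin (n + 1) → L) (i j : Fin (n + 1)) :
    mooreMinor K s i j =
      (-1) ^ ((j : ℕ) * (n + 1)) * mooreMinor K s i 0 ^ Fintype.card K ^ (j : ℕ) := by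
  induction j using Fin.induction with
  | zero => simp
  | succ j ih =>
    have h := frobeniusAlgHom_mooreMinor hL s i j
    rw [ih, map_mul, map_pow, map_neg, map_one, frobeniusAlgHom_apply, Fin.val_castSucc] at h
    have hsq : ((-1 : L) ^ (n + 1)) * (-1) ^ (n + 1) = 1 := by
      rw [← mul_pow, neg_one_mul, neg_neg, one_pow]
    rw [Fin.val_succ]
    linear_combination (-(-1 : L) ^ (n + 1)) * h - mooreMinor K s i j.succ * hsq

theorem det_updateRow_mooreMatrix (hL : Module.finrank K L = n + 1) (s : Fin (n + 1) → L)
    (i : Fin (n + 1)) (y : L) :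
    ((mooreMatrix K s).updateRow i fun c => y ^ Fintype.card K ^ (c : ℕ)).det =
      ∑ k : Fin (n + 1), (-1) ^ ((k : ℕ) * n) * mooreCof K s i ^ Fintype.card K ^ (k : ℕ) *
        y ^ Fintype.card K ^ (k : ℕ) := by
  rw [det_succ_row _ i]
  refine Finset.sum_congr rfl fun k _ => ?_
  rw [updateRow_self, submatrix_updateRow_succAbove, ← mooreMinor,
    mooreMinor_eq_neg_one_pow_mul_pow hL, mooreCof, ← mooreMinor, mul_pow,
    neg_one_pow_pow_card_pow]
  have hsq : ((-1 : L) ^ (k : ℕ)) ^ 2 = 1 := by rw [← pow_mul, pow_mul', neg_one_sq, one_pow]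
  linear_combination ((-1) ^ (i : ℕ) * (-1) ^ ((k : ℕ) * n) *
    mooreMinor K s i 0 ^ Fintype.card K ^ (k : ℕ) * y ^ Fintype.card K ^ (k : ℕ)) * hsq

theorem Tproj_pow_card_sub_one_mul_self (hL : Module.finrank K L = n + 1)
    (s : Fin (n + 1) → L) (i : Fin (n + 1)) (y : L) :
    Tproj K s i (y ^ (Fintype.card K - 1)) * y =
      ((mooreMatrix K s).updateRow i fun c => y ^ Fintype.card K ^ (c : ℕ)).det := by
  rw [det_updateRow_mooreMatrix hL, Tproj, Finset.sum_mul]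
  simp_rw [mul_assoc, pow_sub_one_pow_div_mul_self Fintype.card_pos]

end MooreMinor

section FlagPieces

variable {K L : Type*} [Field K] [Fintype K] [Field L] [Fintype L] [Algebra K L] {n : ℕ}

theorem Tproj_pow_card_sub_one_eq_zero_iff (b : Module.Basis (Fin (n + 1)) K L)
    {β : Fin (n + 1) → L} (hdual : ∀ i j, Algebra.trace K L (β i * b j) = if i = j then 1 else 0)
    (i : Fin (n + 1)) {y : L} (hy : y ≠ 0) :
    Tproj K b i (y ^ (Fintype.card K - 1)) = 0 ↔ Algebra.trace K L (β i * y) = 0 := by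
  have h := Tproj_pow_card_sub_one_mul_self
    ((Module.finrank_eq_card_basis b).trans (Fintype.card_fin _)) b i y
  rw [det_updateRow_mooreMatrix_basis, ← trace_mul_eq_repr b β hdual] at h
  constructor
  · intro hT
    rw [hT, zero_mul, eq_comm, mul_eq_zero, map_eq_zero_iff _ (algebraMap K L).injective] at h
    exact h.resolve_right (det_mooreMatrix_ne_zero b)
  · intro htr
    rw [htr, map_zero, zero_mul, mul_eq_zero] at h
    exact h.resolve_right hy

theorem image_pow_card_sub_one (b : Module.Basis (Fin (n + 1)) K L) :
    (fun y : L => y ^ (Fintype.card K - 1)) '' {y | y ≠ 0} =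
      {x | x ≠ 0 ∧ x ^ ((Fintype.card K ^ (n + 1) - 1) / (Fintype.card K - 1)) = 1} := by
  refine FiniteField.image_pow_setOf_ne_zero ?_
  rw [Module.card_fintype b, Fintype.card_fin,
    Nat.mul_div_cancel' (Nat.sub_one_dvd_pow_sub_one _ _)]

theorem muFlagPiece_eq_image (b : Module.Basis (Fin (n + 1)) K L)
    {β : Fin (n + 1) → L} (hdual : ∀ i j, Algebra.trace K L (β i * b j) = if i = j then 1 else 0)
    (j : Fin (n + 1)) :
    muFlagPiece K b j = (fun y : L => y ^ (Fintype.card K - 1)) '' traceFlagPiece K β j := by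
  have hT := Tproj_pow_card_sub_one_eq_zero_iff b hdual
  ext x
  constructor
  · rintro ⟨hx, hTj, hTi⟩
    obtain ⟨y, hy, rfl⟩ : x ∈ (fun y : L => y ^ (Fintype.card K - 1)) '' {y | y ≠ 0} := by
      rwa [image_pow_card_sub_one b]
    exact ⟨y, ⟨hy, (hT j hy).not.1 hTj, fun i hi => (hT i hy).1 (hTi i hi)⟩, rfl⟩
  · rintro ⟨y, ⟨hy, htrj, htri⟩, rfl⟩
    exact ⟨(image_pow_card_sub_one b).subset ⟨y, hy, rfl⟩, (hT j hy).not.2 htrj,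
      fun i hi => (hT i hy).2 (htri i hi)⟩

end FlagPieces

theorem pairwise_disjoint_muFlagPiece (K : Type*) [Field K] [Fintype K] {L : Type*} [Field L]
    {n : ℕ} (ω : Fin (n + 1) → L) : Pairwise (Function.onFun Disjoint (muFlagPiece K ω)) := by
  intro i j hij
  rw [Function.onFun, Set.disjoint_left]
  rintro x ⟨-, hi, hi'⟩ ⟨-, hj, hj'⟩
  rcases hij.lt_or_gt with h | h
  exacts [hj (hi' j h), hi (hj' i h)]

theorem stmt15_general (K L : Type*) [Field K] [Fintype K] [Field L] [Fintype L] [Algebra K L]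
    (n : ℕ) (ω β : Fin (n + 1) → L)
    (hω : ∃ b : Module.Basis (Fin (n + 1)) K L, ∀ i, b i = ω i)
    (hdual : ∀ i j, Algebra.trace K L (β i * ω j) = if i = j then 1 else 0) :
    (∀ j : Fin (n + 1),
      muFlagPiece K ω j = (fun y : L => y ^ (Fintype.card K - 1)) '' traceFlagPiece K β j) ∧
    (⋃ j : Fin (n + 1), muFlagPiece K ω j) =
      {x : L | x ≠ 0 ∧ x ^ ((Fintype.card K ^ (n + 1) - 1) / (Fintype.card K - 1)) = 1} ∧
    Pairwise (Function.onFun Disjoint (muFlagPiece K ω)) := by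
  obtain ⟨b, hb⟩ := hω
  obtain rfl : ω = ⇑b := funext fun i => (hb i).symm
  have hpiece := muFlagPiece_eq_image b hdual
  refine ⟨hpiece, ?_, pairwise_disjoint_muFlagPiece K b⟩
  rw [Set.iUnion_congr hpiece, ← Set.image_iUnion, iUnion_traceFlagPiece b hdual,
    image_pow_card_sub_one b]

theorem stmt15 (K L : Type*) [Field K] [Fintype K] [Field L] [Fintype L] [Algebra K L]
    (n : ℕ) (ω β : Fin (n + 1) → L)
    (hω : ∃ b : Module.Basis (Fin (n + 1)) K L, ∀ i, b i = ω i)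
    (hβ : ∃ b : Module.Basis (Fin (n + 1)) K L, ∀ i, b i = β i)
    (hdual : ∀ i j, Algebra.trace K L (β i * ω j) = if i = j then 1 else 0) :
    (∀ j : Fin (n + 1),
      muFlagPiece K ω j = (fun y : L => y ^ (Fintype.card K - 1)) '' traceFlagPiece K β j) ∧
    (⋃ j : Fin (n + 1), muFlagPiece K ω j) =
      {x : L | x ≠ 0 ∧ x ^ ((Fintype.card K ^ (n + 1) - 1) / (Fintype.card K - 1)) = 1} ∧
    Pairwise (Function.onFun Disjoint (muFlagPiece K ω)) :=
  stmt15_general K L n ω β hω hdual
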